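/- Let G be a simple graph and (K₁, K₂) a proper and homogeneous pair of cliques with |K₁| + |K₂| ≥ 4. Then the reduction G|_(K₁,K₂) has strictly fewer edges than G; more precisely, G[K₁ ∪ K₂] has at least 4 edges while the gadget on {x₁, x₂, y₁, y₂} has exactly 3 edges, and all other adjacencies are in bijection. -/
import Mathlib


open SimpleGraph

variable {V : Type*}

/-- `v` is complete to the clique `K`: adjacent to every vertex of `K`. -/
def CompleteTo (G : SimpleGraph V) (v : V) (K : Set V) : Prop :=
  ∀ w ∈ K, G.Adj v w

/-- `v` is anti-complete to `K`: adjacent to no vertex of `K`. -/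
def AntiCompleteTo (G : SimpleGraph V) (v : V) (K : Set V) : Prop :=
  ∀ w ∈ K, ¬ G.Adj v w

/-- A proper pair of cliques: nonempty disjoint cliques where every vertex of one
has both a neighbor and a non-neighbor in the other. -/
def ProperPair (G : SimpleGraph V) (K₁ K₂ : Set V) : Prop :=
  G.IsClique K₁ ∧ G.IsClique K₂ ∧ K₁.Nonempty ∧ K₂.Nonempty ∧ Disjoint K₁ K₂ ∧
  (∀ u ∈ K₁, (∃ w ∈ K₂, G.Adj u w) ∧ (∃ w ∈ K₂, ¬ G.Adj u w)) ∧
  (∀ u ∈ K₂, (∃ w ∈ K₁, G.Adj u w) ∧ (∃ w ∈ K₁, ¬ G.Adj u w))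

/-- A homogeneous pair of cliques: nonempty disjoint cliques such that every outside
vertex is complete or anti-complete to each of them. -/
def HomogeneousPair (G : SimpleGraph V) (K₁ K₂ : Set V) : Prop :=
  G.IsClique K₁ ∧ G.IsClique K₂ ∧ K₁.Nonempty ∧ K₂.Nonempty ∧ Disjoint K₁ K₂ ∧
  ∀ z, z ∉ K₁ ∪ K₂ →
    (CompleteTo G z K₁ ∨ AntiCompleteTo G z K₁) ∧
    (CompleteTo G z K₂ ∨ AntiCompleteTo G z K₂)

/-- An almost-proper pair of cliques. -/
def AlmostProperPair (G : SimpleGraph V) (K₁ K₂ : Set V) : Prop :=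
  G.IsClique K₁ ∧ G.IsClique K₂ ∧ K₁.Nonempty ∧ K₂.Nonempty ∧ Disjoint K₁ K₂ ∧
  (∀ u ∈ K₁, ¬ CompleteTo G u K₂) ∧ (∀ u ∈ K₂, ¬ CompleteTo G u K₁) ∧
  ∃ u ∈ K₁, ∃ v ∈ K₂, G.Adj u v

/-- The reduction `G|_(K₁,K₂)`: vertices outside `K₁ ∪ K₂` are kept, while
`K₁` is replaced by `x₁ = Sum.inr 0`, `x₂ = Sum.inr 1` and `K₂` by
`y₁ = Sum.inr 2`, `y₂ = Sum.inr 3`, with gadget edges `x₁x₂, y₁y₂, x₁y₁`,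
`x₁, x₂` joined to the outside vertices complete to `K₁` and `y₁, y₂`
joined to the outside vertices complete to `K₂`. -/
def Reduction (G : SimpleGraph V) (K₁ K₂ : Set V) :
    SimpleGraph ({v : V // v ∉ K₁ ∪ K₂} ⊕ Fin 4) :=
  SimpleGraph.fromRel (fun a b =>
    match a, b with
    | Sum.inl u, Sum.inl v => G.Adj u.1 v.1
    | Sum.inl u, Sum.inr i =>
        ((i = 0 ∨ i = 1) ∧ CompleteTo G u.1 K₁) ∨
        ((i = 2 ∨ i = 3) ∧ CompleteTo G u.1 K₂)
    | Sum.inr i, Sum.inr j => (i = 0 ∧ j = 1) ∨ (i = 2 ∧ j = 3) ∨ (i = 0 ∧ j = 2)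
    | _, _ => False)

lemma adj_inr_iff (G : SimpleGraph V) (K₁ K₂ : Set V) (i j : Fin 4) :
    (Reduction G K₁ K₂).Adj (Sum.inr i) (Sum.inr j) ↔
      (i = 0 ∧ j = 1) ∨ (i = 2 ∧ j = 3) ∨ (i = 0 ∧ j = 2) ∨
      (j = 0 ∧ i = 1) ∨ (j = 2 ∧ i = 3) ∨ (j = 0 ∧ i = 2) := by
  rw [Reduction, SimpleGraph.fromRel_adj]
  simp only [ne_eq, Sum.inr.injEq]
  revert i j; decide

lemma adj_inl_iff (G : SimpleGraph V) (K₁ K₂ : Set V) (u v : {v : V // v ∉ K₁ ∪ K₂}) :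
    (Reduction G K₁ K₂).Adj (Sum.inl u) (Sum.inl v) ↔ G.Adj u.1 v.1 := by
  rw [Reduction, SimpleGraph.fromRel_adj]
  constructor
  · rintro ⟨h, h' | h'⟩
    · exact h'
    · exact h'.symm
  · intro h
    exact ⟨fun e => h.ne (congrArg Subtype.val (Sum.inl.inj e)), Or.inl h⟩

lemma adj_inl_inr_iff (G : SimpleGraph V) (K₁ K₂ : Set V) (u : {v : V // v ∉ K₁ ∪ K₂})
    (i : Fin 4) :
    (Reduction G K₁ K₂).Adj (Sum.inl u) (Sum.inr i) ↔
      ((i = 0 ∨ i = 1) ∧ CompleteTo G u.1 K₁) ∨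
      ((i = 2 ∨ i = 3) ∧ CompleteTo G u.1 K₂) := by
  rw [Reduction, SimpleGraph.fromRel_adj]
  constructor
  · rintro ⟨h, h' | h'⟩
    · exact h'
    · exact h'.elim
  · intro h
    exact ⟨fun e => by simp at e, Or.inl h⟩

lemma gadget_card (G : SimpleGraph V) (K₁ K₂ : Set V) :
    {e ∈ (Reduction G K₁ K₂).edgeSet | ∀ x ∈ e, ∃ i : Fin 4, x = Sum.inr i}.ncard = 3 := by
  have hset : {e ∈ (Reduction G K₁ K₂).edgeSet | ∀ x ∈ e, ∃ i : Fin 4, x = Sum.inr i} =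
      {s(Sum.inr 0, Sum.inr 1), s(Sum.inr 2, Sum.inr 3), s(Sum.inr 0, Sum.inr 2)} := by
    ext e
    induction e using Sym2.ind with
    | _ x y =>
      simp only [Set.mem_setOf_eq, SimpleGraph.mem_edgeSet, Sym2.mem_iff,
        Set.mem_insert_iff, Set.mem_singleton_iff, Sym2.eq_iff]
      constructor
      · rintro ⟨hadj, hmem⟩
        obtain ⟨i, rfl⟩ := hmem x (Or.inl rfl)
        obtain ⟨j, rfl⟩ := hmem y (Or.inr rfl)
        rw [adj_inr_iff] at hadj
        simp only [Sum.inr.injEq]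
        clear hmem; revert hadj; revert i j; decide
      · rintro ((⟨rfl,rfl⟩|⟨rfl,rfl⟩)|(⟨rfl,rfl⟩|⟨rfl,rfl⟩)|(⟨rfl,rfl⟩|⟨rfl,rfl⟩)) <;>
          refine ⟨(adj_inr_iff G K₁ K₂ _ _).mpr (by decide), ?_⟩ <;>
          (rintro x (rfl|rfl) ; exacts [⟨_, rfl⟩, ⟨_, rfl⟩])
  rw [hset]
  rw [Set.ncard_insert_of_notMem (by simp [Sym2.eq_iff]) (Set.toFinite _),
    Set.ncard_insert_of_notMem (by simp [Sym2.eq_iff]) (Set.toFinite _),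
    Set.ncard_singleton]

/-- The reduction of a proper and homogeneous pair of cliques has strictly fewer
edges: `G[K₁ ∪ K₂]` has at least 4 edges while the gadget on `{x₁, x₂, y₁, y₂}`
has exactly 3, and the adjacencies among outside vertices are unchanged. -/
theorem reduction_fewer_edges [Fintype V] (G : SimpleGraph V) (K₁ K₂ : Set V)
    (hprop : ProperPair G K₁ K₂) (hhom : HomogeneousPair G K₁ K₂)
    (hcard : 4 ≤ K₁.ncard + K₂.ncard) :
    (Reduction G K₁ K₂).edgeSet.ncard < G.edgeSet.ncard ∧
    4 ≤ (G.induce (K₁ ∪ K₂)).edgeSet.ncard ∧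
    {e ∈ (Reduction G K₁ K₂).edgeSet | ∀ x ∈ e, ∃ i : Fin 4, x = Sum.inr i}.ncard = 3 ∧
    (∀ u v : {v : V // v ∉ K₁ ∪ K₂},
      (Reduction G K₁ K₂).Adj (Sum.inl u) (Sum.inl v) ↔ G.Adj u.1 v.1) := by
  obtain ⟨hcl₁, hcl₂, hne₁, hne₂, hdisj, hp₁, hp₂⟩ := hprop
  obtain ⟨a₁, ha₁⟩ := hne₁
  obtain ⟨⟨b₁, hb₁, hab⟩, b₂', hb₂', hnab⟩ := hp₁ a₁ ha₁
  set b₂ := b₂' with hb₂def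
  have hb₂ : b₂ ∈ K₂ := hb₂'
  have hb12 : b₂ ≠ b₁ := fun h => hnab (h ▸ hab)
  obtain ⟨-, a₂, ha₂, hna₂⟩ := hp₂ b₁ hb₁
  have ha12 : a₂ ≠ a₁ := fun h => hna₂ (h ▸ hab.symm)
  obtain ⟨⟨c, hc, hac⟩, -⟩ := hp₁ a₂ ha₂
  -- disjointness helpers
  have hd : ∀ x ∈ K₁, ∀ y ∈ K₂, x ≠ y := fun x hx y hy h =>
    Set.disjoint_left.mp hdisj hx (h ▸ hy)
  have hout : ∀ (u : {v : V // v ∉ K₁ ∪ K₂}) (x : V), x ∈ K₁ ∪ K₂ → u.1 ≠ x :=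
    fun u x hx h => u.2 (h ▸ hx)
  -- clique edges
  have hea : G.Adj a₁ a₂ := hcl₁ ha₁ ha₂ (Ne.symm ha12)
  have heb : G.Adj b₁ b₂ := hcl₂ hb₁ hb₂ (Ne.symm hb12)
  have f1 : a₁ ≠ a₂ := Ne.symm ha12
  have f2 : a₂ ≠ a₁ := ha12
  have f3 : a₁ ≠ c := hd _ ha₁ _ hc
  have f4 : c ≠ a₁ := (hd _ ha₁ _ hc).symm
  have f5 : a₂ ≠ b₁ := hd _ ha₂ _ hb₁
  have f6 : b₁ ≠ a₂ := (hd _ ha₂ _ hb₁).symm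
  have f7 : a₂ ≠ b₂ := hd _ ha₂ _ hb₂
  have f8 : b₂ ≠ a₂ := (hd _ ha₂ _ hb₂).symm
  have f9 : a₁ ≠ b₁ := hd _ ha₁ _ hb₁
  have f10 : b₁ ≠ a₁ := (hd _ ha₁ _ hb₁).symm
  have f11 : a₁ ≠ b₂ := hd _ ha₁ _ hb₂
  have f12 : b₂ ≠ a₁ := (hd _ ha₁ _ hb₂).symm
  have f13 : a₂ ≠ c := hd _ ha₂ _ hc
  have f14 : c ≠ a₂ := (hd _ ha₂ _ hc).symm
  -- the vertex map
  set g : ({v : V // v ∉ K₁ ∪ K₂} ⊕ Fin 4) → V :=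
    (fun x => match x with
      | Sum.inl u => u.1
      | Sum.inr i => ![a₁, a₂, b₁, b₂] i) with hg
  have hgr : ∀ i : Fin 4, g (Sum.inr i) = ![a₁, a₂, b₁, b₂] i := fun _ => rfl
  have hgmem : ∀ i : Fin 4, g (Sum.inr i) ∈ K₁ ∪ K₂ := by
    intro i
    fin_cases i <;> simp [hgr]
    · exact Or.inl ha₁
    · exact Or.inl ha₂
    · exact Or.inr hb₁
    · exact Or.inr hb₂
  have hginj : Function.Injective g := by
    rintro (u | i) (v | j) h
    · exact congrArg Sum.inl (Subtype.ext h)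
    · exact absurd h (hout u _ (hgmem j))
    · exact absurd h.symm (hout v _ (hgmem i))
    · congr 1
      fin_cases i <;> fin_cases j <;> simp only [hgr] at h <;>
        first
          | rfl
          | (exfalso; revert h; simp [Matrix.cons_val_zero, Matrix.cons_val_one]) <;>
            first
              | exact ha12.symm
              | exact ha12
              | exact hb12.symm
              | exact hb12
              | exact hd _ ha₁ _ hb₁
              | exact hd _ ha₁ _ hb₂
              | exact hd _ ha₂ _ hb₁
              | exact hd _ ha₂ _ hb₂
              | exact (hd _ ha₁ _ hb₁).symm
              | exact (hd _ ha₁ _ hb₂).symm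
              | exact (hd _ ha₂ _ hb₁).symm
              | exact (hd _ ha₂ _ hb₂).symm
  -- image of the reduction's edges inside G's edges
  have himg : Sym2.map g '' (Reduction G K₁ K₂).edgeSet ⊆ G.edgeSet := by
    rintro e ⟨e', he', rfl⟩
    induction e' using Sym2.ind with
    | _ x y =>
      rw [SimpleGraph.mem_edgeSet] at he'
      rw [Sym2.map_pair_eq, SimpleGraph.mem_edgeSet]
      match x, y with
      | Sum.inl u, Sum.inl v => exact (adj_inl_iff G K₁ K₂ u v).mp he'
      | Sum.inl u, Sum.inr i =>
        rcases (adj_inl_inr_iff G K₁ K₂ u i).mp he' with ⟨hi, hcu⟩ | ⟨hi, hcu⟩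
        · rcases hi with rfl | rfl
          · exact hcu a₁ ha₁
          · exact hcu a₂ ha₂
        · rcases hi with rfl | rfl
          · exact hcu b₁ hb₁
          · exact hcu b₂ hb₂
      | Sum.inr i, Sum.inl u =>
        rcases (adj_inl_inr_iff G K₁ K₂ u i).mp he'.symm with ⟨hi, hcu⟩ | ⟨hi, hcu⟩
        · rcases hi with rfl | rfl
          · exact (hcu a₁ ha₁).symm
          · exact (hcu a₂ ha₂).symm
        · rcases hi with rfl | rfl
          · exact (hcu b₁ hb₁).symm
          · exact (hcu b₂ hb₂).symm
      | Sum.inr i, Sum.inr j =>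
        rcases (adj_inr_iff G K₁ K₂ i j).mp he' with
          ⟨rfl, rfl⟩ | ⟨rfl, rfl⟩ | ⟨rfl, rfl⟩ | ⟨rfl, rfl⟩ | ⟨rfl, rfl⟩ | ⟨rfl, rfl⟩ <;>
          simp only [hgr] <;> simp
        · exact hea
        · exact heb
        · exact hab
        · exact hea.symm
        · exact heb.symm
        · exact hab.symm
  -- the missed edge
  have hmiss : s(a₂, c) ∈ G.edgeSet := hac
  have hnotmem : s(a₂, c) ∉ Sym2.map g '' (Reduction G K₁ K₂).edgeSet := by
    rintro ⟨e', he', heq⟩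
    induction e' using Sym2.ind with
    | _ x y =>
      rw [SimpleGraph.mem_edgeSet] at he'
      rw [Sym2.map_pair_eq, Sym2.eq_iff] at heq
      match x, y with
      | Sum.inl u, Sum.inl v =>
        rcases heq with ⟨h1, -⟩ | ⟨h1, -⟩
        · exact hout u a₂ (Or.inl ha₂) h1
        · exact hout u c (Or.inr hc) h1
      | Sum.inl u, Sum.inr i =>
        rcases heq with ⟨h1, -⟩ | ⟨h1, -⟩
        · exact hout u a₂ (Or.inl ha₂) h1
        · exact hout u c (Or.inr hc) h1
      | Sum.inr i, Sum.inl u =>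
        rcases heq with ⟨-, h2⟩ | ⟨-, h2⟩
        · exact hout u c (Or.inr hc) h2
        · exact hout u a₂ (Or.inl ha₂) h2
      | Sum.inr i, Sum.inr j =>
        rcases (adj_inr_iff G K₁ K₂ i j).mp he' with
          ⟨rfl, rfl⟩ | ⟨rfl, rfl⟩ | ⟨rfl, rfl⟩ | ⟨rfl, rfl⟩ | ⟨rfl, rfl⟩ | ⟨rfl, rfl⟩ <;>
          simp only [hgr] at heq <;>
          simp [f1, f2, f3, f4, f5, f6, f7, f8] at heq
  have hss : Sym2.map g '' (Reduction G K₁ K₂).edgeSet ⊂ G.edgeSet :=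
    (Set.ssubset_iff_of_subset himg).mpr ⟨_, hmiss, hnotmem⟩
  have hlt : (Reduction G K₁ K₂).edgeSet.ncard < G.edgeSet.ncard := by
    calc (Reduction G K₁ K₂).edgeSet.ncard
        = (Sym2.map g '' (Reduction G K₁ K₂).edgeSet).ncard :=
          (Set.ncard_image_of_injective _ (Sym2.map.injective hginj)).symm
      _ < G.edgeSet.ncard := Set.ncard_lt_ncard hss (Set.toFinite _)
  -- part 2: at least 4 edges inside
  have hmemE : ∀ (x y : V) (hx : x ∈ K₁ ∪ K₂) (hy : y ∈ K₁ ∪ K₂), G.Adj x y →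
      s(x, y) ∈ Sym2.map (Subtype.val) '' (G.induce (K₁ ∪ K₂)).edgeSet := by
    intro x y hx hy h
    refine ⟨s(⟨x, hx⟩, ⟨y, hy⟩), ?_, by rw [Sym2.map_pair_eq]⟩
    rw [SimpleGraph.mem_edgeSet]
    exact h
  have hE4 : ({s(a₁, a₂), s(b₁, b₂), s(a₁, b₁), s(a₂, c)} : Set (Sym2 V)) ⊆
      Sym2.map (Subtype.val) '' (G.induce (K₁ ∪ K₂)).edgeSet := by
    intro e he
    rcases he with rfl | rfl | rfl | rfl
    · exact hmemE _ _ (Or.inl ha₁) (Or.inl ha₂) hea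
    · exact hmemE _ _ (Or.inr hb₁) (Or.inr hb₂) heb
    · exact hmemE _ _ (Or.inl ha₁) (Or.inr hb₁) hab
    · exact hmemE _ _ (Or.inl ha₂) (Or.inr hc) hac
  have hcard4 : ({s(a₁, a₂), s(b₁, b₂), s(a₁, b₁), s(a₂, c)} : Set (Sym2 V)).ncard = 4 := by
    rw [Set.ncard_insert_of_notMem
        (by simp [Sym2.eq_iff, f1, f2, f3, f5, f7, f9, f11]) (Set.toFinite _),
      Set.ncard_insert_of_notMem
        (by simp [Sym2.eq_iff, f6, f8, f10, f12]) (Set.toFinite _),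
      Set.ncard_insert_of_notMem
        (by simp [Sym2.eq_iff, f1, f3, f5]) (Set.toFinite _),
      Set.ncard_singleton]
  have h4le : 4 ≤ (G.induce (K₁ ∪ K₂)).edgeSet.ncard := by
    have h1 : ({s(a₁, a₂), s(b₁, b₂), s(a₁, b₁), s(a₂, c)} : Set (Sym2 V)).ncard ≤
        (Sym2.map (Subtype.val) '' (G.induce (K₁ ∪ K₂)).edgeSet).ncard :=
      Set.ncard_le_ncard hE4 (Set.toFinite _)
    rwa [hcard4, Set.ncard_image_of_injective _ (Sym2.map.injective Subtype.val_injective)]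
      at h1
  exact ⟨hlt, h4le, gadget_card G K₁ K₂, adj_inl_iff G K₁ K₂⟩
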